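/- arXiv:2211.03161 — 3 statements merged into one kernel-verified Lean document; each statement's English description precedes it below -/
import Mathlib

section
/- Let C ≥ 0 be a real number and let s : ℝ → ℝ be a function with s(x) ≥ 0 for all x. Suppose that s(x) ≤ C for all real x with 1 < x ≤ 16, and that s(x) ≤ s(x^(2/3)) + C·(ln x)·ln(ln x) for all real x > 16. Then s(x) ≤ C + 3·C·(ln x)·ln(ln x) for all real x > 16. -/
open Real

/-- The iterates of `x ↦ x ^ p` reach `(1, a]` because `log (x ^ p ^ n) = p ^ n * log x → 0`. -/
theorem Real.rpow_induction {P : ℝ → Prop} {a p : ℝ} (ha : 1 < a) (hp₀ : 0 < p) (hp₁ : p < 1)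
    (base : ∀ x, 1 < x → x ≤ a → P x) (step : ∀ x, a < x → P (x ^ p) → P x) :
    ∀ x, 1 < x → P x := by
  have key : ∀ n : ℕ, ∀ x, 1 < x → p ^ n * log x < log a → P x := by
    intro n
    induction n with
    | zero =>
      intro x hx hlog
      rw [pow_zero, one_mul] at hlog
      exact base x hx ((log_lt_log_iff (by linarith) (by linarith)).mp hlog).le
    | succ n ih =>
      intro x hx hlog
      rcases le_or_gt x a with hxa | hxa
      · exact base x hx hxa
      · refine step x hxa (ih _ (one_lt_rpow hx hp₀) ?_)
        rwa [log_rpow (by linarith), ← mul_assoc, ← pow_succ]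
  intro x hx
  have hlogx : 0 < log x := log_pos hx
  obtain ⟨n, hn⟩ := exists_pow_lt_of_lt_one (div_pos (log_pos ha) hlogx) hp₁
  exact key n x hx ((lt_div_iff₀ hlogx).mp hn)

theorem stmt_1_general (C : ℝ) (hC : 0 ≤ C) (s : ℝ → ℝ)
    (hbase : ∀ x : ℝ, 1 < x → x ≤ 16 → s x ≤ C)
    (hrec : ∀ x : ℝ, 16 < x →
      s x ≤ s (x ^ ((2 : ℝ) / 3)) + C * Real.log x * Real.log (Real.log x)) :
    ∀ x : ℝ, 16 < x → s x ≤ C + 3 * C * Real.log x * Real.log (Real.log x) := by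
  have hlog16 : 1 < log 16 := by
    rw [lt_log_iff_exp_lt (by norm_num)]
    linarith [exp_one_lt_d9]
  refine fun x₀ hx₀ => Real.rpow_induction
    (P := fun x => 16 < x → s x ≤ C + 3 * C * log x * log (log x)) (a := 16) (p := 2 / 3)
    (by norm_num) (by norm_num) (by norm_num) (fun _ _ hx16 hx => absurd hx hx16.not_gt) ?_
    x₀ (by linarith) hx₀
  intro x hx ih _
  have hL : 1 < log x := hlog16.trans (log_lt_log (by norm_num) hx)
  have hterm : 0 ≤ C * log x * log (log x) := by have := log_pos hL; positivity
  have hy : s (x ^ ((2 : ℝ) / 3)) ≤ C + 2 * C * log x * log (log x) := by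
    rcases le_or_gt (x ^ ((2 : ℝ) / 3)) 16 with hy | hy
    · linarith [hbase _ (one_lt_rpow (by linarith) (by norm_num)) hy]
    · calc s (x ^ ((2 : ℝ) / 3))
          ≤ C + 3 * C * (2 / 3 * log x) * log (2 / 3 * log x) := by
            simpa only [log_rpow (by linarith : (0 : ℝ) < x)] using ih hy
        _ ≤ C + 3 * C * (2 / 3 * log x) * log (log x) := by gcongr; linarith
        _ = C + 2 * C * log x * log (log x) := by ring
  linarith [hrec x hx]

theorem stmt_1 (C : ℝ) (hC : 0 ≤ C) (s : ℝ → ℝ)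
    (hs_nonneg : ∀ x : ℝ, 0 ≤ s x)
    (hbase : ∀ x : ℝ, 1 < x → x ≤ 16 → s x ≤ C)
    (hrec : ∀ x : ℝ, 16 < x →
      s x ≤ s (x ^ ((2 : ℝ) / 3)) + C * Real.log x * Real.log (Real.log x)) :
    ∀ x : ℝ, 16 < x → s x ≤ C + 3 * C * Real.log x * Real.log (Real.log x) :=
  stmt_1_general C hC s hbase hrec
end

section
/- Let C ≥ 0 be a real number and let S : ℝ → ℝ be a function with S(x) ≥ 0 for all x. Suppose that S(x) ≤ C·x for all real x with 1 < x ≤ 4, and that S(x) ≤ x^(1/3)·S(x^(2/3)) + C·x·ln x for all real x > 4. Then S(x) ≤ C·x·(1 + 3·ln x) for all real x > 1. -/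
theorem stmt_2 (C : ℝ) (hC : 0 ≤ C) (S : ℝ → ℝ)
    (hS_nonneg : ∀ x : ℝ, 0 ≤ S x)
    (hbase : ∀ x : ℝ, 1 < x → x ≤ 4 → S x ≤ C * x)
    (hrec : ∀ x : ℝ, 4 < x →
      S x ≤ x ^ ((1 : ℝ) / 3) * S (x ^ ((2 : ℝ) / 3)) + C * x * Real.log x) :
    ∀ x : ℝ, 1 < x → S x ≤ C * x * (1 + 3 * Real.log x) := by
  have key : ∀ n : ℕ, ∀ x : ℝ, 1 < x → x ≤ (4 : ℝ) ^ (((3:ℝ)/2) ^ n) →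
      S x ≤ C * x * (1 + 3 * Real.log x) := by
    intro n
    induction n with
    | zero =>
      intro x hx1 hx4
      simp only [pow_zero, Real.rpow_one] at hx4
      have hlog : 0 ≤ Real.log x := Real.log_nonneg hx1.le
      have h := hbase x hx1 hx4
      nlinarith [mul_nonneg hC (le_of_lt (lt_trans one_pos hx1))]
    | succ n ih =>
      intro x hx1 hx4
      by_cases hx : x ≤ 4
      · have hlog : 0 ≤ Real.log x := Real.log_nonneg hx1.le
        have h := hbase x hx1 hx
        nlinarith [mul_nonneg hC (le_of_lt (lt_trans one_pos hx1))]
      · push_neg at hx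
        have hx0 : (0:ℝ) < x := lt_trans one_pos hx1
        set y := x ^ ((2:ℝ)/3) with hy
        have hy1 : 1 < y := Real.one_lt_rpow_iff_of_pos hx0 |>.2 (Or.inl ⟨hx1, by norm_num⟩)
        have hyle : y ≤ (4 : ℝ) ^ (((3:ℝ)/2) ^ n) := by
          have h := Real.rpow_le_rpow (le_of_lt hx0) hx4 (by norm_num : (0:ℝ) ≤ (2:ℝ)/3)
          rw [← Real.rpow_mul (by norm_num : (0:ℝ) ≤ 4)] at h
          have he : (((3:ℝ)/2) ^ (n+1)) * ((2:ℝ)/3) = ((3:ℝ)/2) ^ n := by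
            rw [pow_succ]; ring
          rwa [he] at h
        have hIH := ih y hy1 hyle
        have hlogy : Real.log y = (2/3) * Real.log x := by
          rw [hy, Real.log_rpow hx0]
        have hxy : x ^ ((1:ℝ)/3) * y = x := by
          rw [hy, ← Real.rpow_add hx0]
          norm_num
        have h13 : (0:ℝ) ≤ x ^ ((1:ℝ)/3) := Real.rpow_nonneg hx0.le _
        have h1 := hrec x hx
        have h2 : x ^ ((1:ℝ)/3) * S y ≤ x ^ ((1:ℝ)/3) * (C * y * (1 + 3 * Real.log y)) :=
          mul_le_mul_of_nonneg_left hIH h13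
        have h3 : x ^ ((1:ℝ)/3) * (C * y * (1 + 3 * Real.log y)) = C * x * (1 + 2 * Real.log x) := by
          rw [hlogy]
          have : x ^ ((1:ℝ)/3) * (C * y * (1 + 3 * (2/3 * Real.log x)))
              = C * (x ^ ((1:ℝ)/3) * y) * (1 + 2 * Real.log x) := by ring
          rw [this, hxy]
        have := h1.trans (by linarith [h2, h3.le] : x ^ ((1:ℝ)/3) * S y + C * x * Real.log x ≤ C * x * (1 + 2 * Real.log x) + C * x * Real.log x)
        linarith
  intro x hx1
  have hx0 : (0:ℝ) < x := lt_trans one_pos hx1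
  obtain ⟨n, hn⟩ := pow_unbounded_of_one_lt (Real.log x / Real.log 4) (by norm_num : (1:ℝ) < 3/2)
  apply key n x hx1
  have hlog4 : (0:ℝ) < Real.log 4 := Real.log_pos (by norm_num)
  have : Real.log x < ((3:ℝ)/2) ^ n * Real.log 4 := by
    rw [div_lt_iff₀ hlog4] at hn
    linarith
  have := (Real.lt_rpow_iff_log_lt hx0 (by norm_num : (0:ℝ) < 4)).2 this
  exact this.le
end

section
/- Let g ≥ 2 and β ≥ 1 be integers. For an integer s with 0 ≤ s < β, call a set of natural numbers a 'child range at level s' if it equals {x : m·g^(s+1) + a·g^s ≤ x < m·g^(s+1) + b·g^s} for some integers m ≥ 0 and 0 ≤ a < b ≤ g; such a child range is a 'prefix range' if a = 0 and a 'suffix range' if b = g. Then for all integers ℓ, r with 0 ≤ ℓ < r ≤ g^β, the interval {x : ℓ ≤ x < r} can be written as the union of a pairwise-disjoint family of at most 2β − 1 child ranges at levels 0 ≤ s < β, of which all but at most one are prefix ranges or suffix ranges. -/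
/-!
Call `[c·g^k, (c+1)·g^k)` a block of level `k`; its children are the `g` blocks of level `k - 1`
inside it. An interval `[l, r)` inside a block of level `k + 1` either lies inside one child, and
we recurse, or it splits into a tail of the child containing `l`, a run of whole children, and a
head of the child containing `r - 1`. The run is one child range, the only one that may be
neither a prefix nor a suffix range. A tail of a block of level `k` is covered by at most `k`
suffix ranges, one per level (peel off the whole children to the right of the child containing
`l` and recurse into that child), and a head symmetrically by `k` prefix ranges: at most
`k + 1 + k = 2(k + 1) - 1` ranges in all.
-/

/-- The set `{x : m·g^(s+1) + a·g^s ≤ x < m·g^(s+1) + b·g^s}` of natural numbers: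
a "child range at level `s`" when `m ≥ 0` and `0 ≤ a < b ≤ g`. -/
def childRange (g s m a b : ℕ) : Set ℕ :=
  {x | m * g ^ (s + 1) + a * g ^ s ≤ x ∧ x < m * g ^ (s + 1) + b * g ^ s}

def IsTiling {ι α : Type*} (f : ι → Set α) (S : Finset ι) (t : Set α) : Prop :=
  (⋃ i ∈ S, f i) = t ∧ (S : Set ι).PairwiseDisjoint f

namespace IsTiling

variable {ι α : Type*} {f : ι → Set α} {S T : Finset ι} {t u : Set α}

theorem empty : IsTiling f ∅ ∅ := by
  simp [IsTiling]

theorem singleton (i : ι) : IsTiling f {i} (f i) := by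
  simp [IsTiling]

theorem subset (h : IsTiling f S t) {i : ι} (hi : i ∈ S) : f i ⊆ t :=
  h.1 ▸ Set.subset_biUnion_of_mem (u := f) (Finset.mem_coe.mpr hi)

theorem union [DecidableEq ι] (hS : IsTiling f S t) (hT : IsTiling f T u)
    (htu : Disjoint t u) : IsTiling f (S ∪ T) (t ∪ u) := by
  refine ⟨by rw [Finset.set_biUnion_union, hS.1, hT.1], ?_⟩
  rw [Finset.coe_union]
  exact hS.2.union hT.2 fun i hi j hj _ => htu.mono (hS.subset hi) (hT.subset hj)

theorem union_Ico [DecidableEq ι] [LinearOrder α] {a b c : α}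
    (hS : IsTiling f S (Set.Ico a b)) (hT : IsTiling f T (Set.Ico b c)) (hab : a ≤ b)
    (hbc : b ≤ c) : IsTiling f (S ∪ T) (Set.Ico a c) := by
  rw [← Set.Ico_union_Ico_eq_Ico hab hbc]
  exact hS.union hT Set.Ico_disjoint_Ico_same

end IsTiling

theorem childRange_sub_mul {g s c A B : ℕ} (hA : c * g ≤ A) (hB : c * g ≤ B) :
    childRange g s c (A - c * g) (B - c * g) = Set.Ico (A * g ^ s) (B * g ^ s) := by
  have start_eq : ∀ X, c * g ≤ X → c * g ^ (s + 1) + (X - c * g) * g ^ s = X * g ^ s := by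
    intro X hX
    rw [pow_succ', ← mul_assoc, ← add_mul, Nat.add_sub_cancel' hX]
  ext x
  simp only [childRange, Set.mem_ofPred_eq, Set.mem_Ico, start_eq A hA, start_eq B hB]

theorem exists_child_block {g G c x : ℕ} (h₁ : c * (g * G) ≤ x) (h₂ : x < (c + 1) * (g * G)) :
    ∃ A, c * g ≤ A ∧ A < (c + 1) * g ∧ A * G ≤ x ∧ x < (A + 1) * G := by
  have hG : 0 < G := Nat.pos_of_ne_zero (by rintro rfl; simp at h₂)
  refine ⟨x / G, ?_, ?_, Nat.div_mul_le_self x G, ?_⟩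
  · rw [Nat.le_div_iff_mul_le hG, mul_assoc]
    exact h₁
  · rw [Nat.div_lt_iff_lt_mul hG, mul_assoc]
    exact h₂
  · rw [add_one_mul]
    exact Nat.lt_div_mul_add hG

structure Piece where
  s : ℕ
  m : ℕ
  a : ℕ
  b : ℕ
  deriving DecidableEq

namespace Piece

def toSet (g : ℕ) (p : Piece) : Set ℕ := childRange g p.s p.m p.a p.b

def Fits (g n : ℕ) (p : Piece) : Prop := p.s ≤ n ∧ p.a < p.b ∧ p.b ≤ g

theorem Fits.mono {g n n' : ℕ} {p : Piece} (h : p.Fits g n) (hn : n ≤ n') : p.Fits g n' :=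
  ⟨h.1.trans hn, h.2⟩

end Piece

section Tilings

open Piece

variable {g : ℕ}

theorem exists_tiling_Ico_mul_pow {s c A B : ℕ} (hA : c * g ≤ A) (hAB : A ≤ B)
    (hB : B ≤ (c + 1) * g) :
    ∃ S : Finset Piece, IsTiling (toSet g) S (Set.Ico (A * g ^ s) (B * g ^ s)) ∧ S.card ≤ 1 ∧
      ∀ p ∈ S, p.Fits g s ∧ (A = c * g → p.a = 0) ∧ (B = (c + 1) * g → p.b = g) := by
  rcases hAB.eq_or_lt with rfl | hlt
  · exact ⟨∅, by simpa using IsTiling.empty, by simp, by simp⟩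
  refine ⟨{⟨s, c, A - c * g, B - c * g⟩}, ?_, by simp, ?_⟩
  · rw [← childRange_sub_mul hA (hA.trans hAB)]
    exact IsTiling.singleton _
  · have hcg : (c + 1) * g = c * g + g := by ring
    simp only [Finset.mem_singleton, forall_eq, Fits]
    omega

theorem exists_suffix_tiling (n : ℕ) : ∀ c l, c * g ^ (n + 1) ≤ l → l < (c + 1) * g ^ (n + 1) →
    ∃ S : Finset Piece, IsTiling (toSet g) S (Set.Ico l ((c + 1) * g ^ (n + 1))) ∧
      S.card ≤ n + 1 ∧ ∀ p ∈ S, p.Fits g n ∧ p.b = g := by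
  induction n with
  | zero =>
    intro c l h₁ h₂
    rw [zero_add, pow_one] at h₁ h₂ ⊢
    obtain ⟨S, hS, hcard, hp⟩ := exists_tiling_Ico_mul_pow (s := 0) h₁ h₂.le le_rfl
    rw [pow_zero, mul_one, mul_one] at hS
    exact ⟨S, hS, hcard, fun p hpS => ⟨(hp p hpS).1, (hp p hpS).2.2 rfl⟩⟩
  | succ n ih =>
    intro c l h₁ h₂
    rw [pow_succ'] at h₁ h₂ ⊢
    obtain ⟨A, hcA, hAc, hAl, hlA⟩ := exists_child_block h₁ h₂
    obtain ⟨S₁, hS₁, hcard₁, hp₁⟩ := ih A l hAl hlA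
    obtain ⟨S₂, hS₂, hcard₂, hp₂⟩ :=
      exists_tiling_Ico_mul_pow (s := n + 1) (by omega : c * g ≤ A + 1) hAc le_rfl
    refine ⟨S₁ ∪ S₂, ?_, (Finset.card_union_le _ _).trans (by omega), ?_⟩
    · rw [← mul_assoc]
      exact hS₁.union_Ico hS₂ hlA.le (Nat.mul_le_mul_right _ hAc)
    · intro p hp
      rcases Finset.mem_union.mp hp with hp | hp
      · exact ⟨(hp₁ p hp).1.mono n.le_succ, (hp₁ p hp).2⟩
      · exact ⟨(hp₂ p hp).1, (hp₂ p hp).2.2 rfl⟩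

theorem exists_prefix_tiling (n : ℕ) : ∀ c r, c * g ^ (n + 1) < r → r ≤ (c + 1) * g ^ (n + 1) →
    ∃ S : Finset Piece, IsTiling (toSet g) S (Set.Ico (c * g ^ (n + 1)) r) ∧
      S.card ≤ n + 1 ∧ ∀ p ∈ S, p.Fits g n ∧ p.a = 0 := by
  induction n with
  | zero =>
    intro c r h₁ h₂
    rw [zero_add, pow_one] at h₁ h₂ ⊢
    obtain ⟨S, hS, hcard, hp⟩ := exists_tiling_Ico_mul_pow (s := 0) le_rfl h₁.le h₂
    rw [pow_zero, mul_one, mul_one] at hS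
    exact ⟨S, hS, hcard, fun p hpS => ⟨(hp p hpS).1, (hp p hpS).2.1 rfl⟩⟩
  | succ n ih =>
    intro c r h₁ h₂
    rw [pow_succ'] at h₁ h₂ ⊢
    obtain ⟨B, hcB, hBc, hBr, hrB⟩ :=
      exists_child_block (g := g) (G := g ^ (n + 1)) (c := c) (x := r - 1) (by omega) (by omega)
    obtain ⟨S₁, hS₁, hcard₁, hp₁⟩ :=
      exists_tiling_Ico_mul_pow (s := n + 1) le_rfl hcB hBc.le
    obtain ⟨S₂, hS₂, hcard₂, hp₂⟩ := ih B r (by omega) (by omega)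
    refine ⟨S₁ ∪ S₂, ?_, (Finset.card_union_le _ _).trans (by omega), ?_⟩
    · rw [← mul_assoc]
      exact hS₁.union_Ico hS₂ (Nat.mul_le_mul_right _ hcB) (by omega)
    · intro p hp
      rcases Finset.mem_union.mp hp with hp | hp
      · exact ⟨(hp₁ p hp).1, (hp₁ p hp).2.1 rfl⟩
      · exact ⟨(hp₂ p hp).1.mono n.le_succ, (hp₂ p hp).2⟩

theorem exists_tiling_of_child_lt {n c A B l r : ℕ} (hcA : c * g ≤ A) (hAB : A < B)
    (hBc : B < (c + 1) * g) (hAl : A * g ^ (n + 1) ≤ l) (hlA : l < (A + 1) * g ^ (n + 1))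
    (hBr : B * g ^ (n + 1) < r) (hrB : r ≤ (B + 1) * g ^ (n + 1)) :
    ∃ S : Finset Piece, IsTiling (toSet g) S (Set.Ico l r) ∧ S.card ≤ 2 * (n + 1) + 1 ∧
      (∀ p ∈ S, p.Fits g (n + 1)) ∧ (S.filter fun p => ¬(p.a = 0 ∨ p.b = g)).card ≤ 1 := by
  obtain ⟨S₁, hS₁, hcard₁, hp₁⟩ := exists_suffix_tiling n A l hAl hlA
  obtain ⟨S₂, hS₂, hcard₂, hp₂⟩ :=
    exists_tiling_Ico_mul_pow (s := n + 1) (by omega : c * g ≤ A + 1) hAB hBc.le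
  obtain ⟨S₃, hS₃, hcard₃, hp₃⟩ := exists_prefix_tiling n B r hBr hrB
  refine ⟨S₁ ∪ S₂ ∪ S₃, ?_, ?_, ?_, ?_⟩
  · have hAB' := Nat.mul_le_mul_right (g ^ (n + 1)) (hAB : A + 1 ≤ B)
    exact (hS₁.union_Ico hS₂ hlA.le hAB').union_Ico hS₃ (hlA.le.trans hAB') hBr.le
  · grw [Finset.card_union_le, Finset.card_union_le]
    omega
  · intro p hp
    simp only [Finset.mem_union] at hp
    rcases hp with (hp | hp) | hp
    · exact (hp₁ p hp).1.mono n.le_succ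
    · exact (hp₂ p hp).1
    · exact (hp₃ p hp).1.mono n.le_succ
  · refine (Finset.card_le_card fun p hp => ?_).trans hcard₂
    simp only [Finset.mem_filter, Finset.mem_union] at hp
    rcases hp with ⟨(hp | hp) | hp, hmixed⟩
    · exact absurd (Or.inr (hp₁ p hp).2) hmixed
    · exact hp
    · exact absurd (Or.inl (hp₃ p hp).2) hmixed

theorem exists_tiling (n : ℕ) : ∀ c l r, c * g ^ (n + 1) ≤ l → l < r →
    r ≤ (c + 1) * g ^ (n + 1) →
    ∃ S : Finset Piece, IsTiling (toSet g) S (Set.Ico l r) ∧ S.card ≤ 2 * n + 1 ∧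
      (∀ p ∈ S, p.Fits g n) ∧ (S.filter fun p => ¬(p.a = 0 ∨ p.b = g)).card ≤ 1 := by
  induction n with
  | zero =>
    intro c l r h₁ hlr h₂
    rw [zero_add, pow_one] at h₁ h₂
    obtain ⟨S, hS, hcard, hp⟩ := exists_tiling_Ico_mul_pow (s := 0) h₁ hlr.le h₂
    rw [pow_zero, mul_one, mul_one] at hS
    exact ⟨S, hS, hcard, fun p hpS => (hp p hpS).1,
      (Finset.card_filter_le _ _).trans hcard⟩
  | succ n ih =>
    intro c l r h₁ hlr h₂
    rw [pow_succ'] at h₁ h₂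
    obtain ⟨A, hcA, -, hAl, hlA⟩ := exists_child_block h₁ (by omega : l < _)
    obtain ⟨B, -, hBc, hBr, hrB⟩ :=
      exists_child_block (g := g) (G := g ^ (n + 1)) (c := c) (x := r - 1) (by omega) (by omega)
    have hAB : A ≤ B := by
      have : A * g ^ (n + 1) < (B + 1) * g ^ (n + 1) := by omega
      exact Nat.lt_succ_iff.mp (Nat.lt_of_mul_lt_mul_right this)
    rcases hAB.eq_or_lt with rfl | hAB
    · obtain ⟨S, hS, hcard, hp, hmixed⟩ := ih A l r hAl hlr (by omega)
      exact ⟨S, hS, by omega, fun p hpS => (hp p hpS).mono n.le_succ, hmixed⟩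
    · exact exists_tiling_of_child_lt hcA hAB hBc hAl hlA (by omega) (by omega)

end Tilings

theorem stmt_3_general (g β : ℕ) (hβ : 1 ≤ β) :
    ∀ ℓ r : ℕ, ℓ < r → r ≤ g ^ β →
      ∃ (k : ℕ) (s m a b : Fin k → ℕ),
        k ≤ 2 * β - 1 ∧
        (∀ j, s j < β ∧ a j < b j ∧ b j ≤ g) ∧
        ({x | ℓ ≤ x ∧ x < r} = ⋃ j, childRange g (s j) (m j) (a j) (b j)) ∧
        (Pairwise fun j j' : Fin k => Disjoint
          (childRange g (s j) (m j) (a j) (b j))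
          (childRange g (s j') (m j') (a j') (b j'))) ∧
        (∀ j j' : Fin k, ¬(a j = 0 ∨ b j = g) → ¬(a j' = 0 ∨ b j' = g) → j = j') := by
  intro ℓ r hℓr hr
  obtain ⟨n, rfl⟩ := Nat.exists_eq_add_of_le' hβ
  obtain ⟨S, ⟨hunion, hdisj⟩, hcard, hfits, hmixed⟩ :=
    exists_tiling n 0 ℓ r (by simp) hℓr (by simpa using hr)
  let p : Fin S.card → Piece := fun j => S.equivFin.symm j
  have hp_mem : ∀ j, p j ∈ S := fun j => (S.equivFin.symm j).2
  have hp_inj : p.Injective := Subtype.val_injective.comp S.equivFin.symm.injective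
  refine ⟨S.card, fun j => (p j).s, fun j => (p j).m, fun j => (p j).a, fun j => (p j).b,
    by omega, fun j => ?_, ?_, fun j j' hne => hdisj (hp_mem j) (hp_mem j') (hp_inj.ne hne),
    fun j j' hj hj' => hp_inj (Finset.card_le_one.mp hmixed _ (Finset.mem_filter.mpr ⟨hp_mem j, hj⟩)
      _ (Finset.mem_filter.mpr ⟨hp_mem j', hj'⟩))⟩
  · obtain ⟨hs, hab, hb⟩ := hfits _ (hp_mem j)
    exact ⟨Nat.lt_succ_of_le hs, hab, hb⟩
  · change Set.Ico ℓ r = ⋃ j, Piece.toSet g (p j)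
    rw [← hunion]
    exact ((S.equivFin.symm.iSup_comp (g := fun q : S => Piece.toSet g q)).trans
      (Set.iUnion_subtype (· ∈ S) _)).symm

theorem stmt_3 (g β : ℕ) (hg : 2 ≤ g) (hβ : 1 ≤ β) :
    ∀ ℓ r : ℕ, ℓ < r → r ≤ g ^ β →
      ∃ (k : ℕ) (s m a b : Fin k → ℕ),
        k ≤ 2 * β - 1 ∧
        (∀ j, s j < β ∧ a j < b j ∧ b j ≤ g) ∧
        ({x | ℓ ≤ x ∧ x < r} = ⋃ j, childRange g (s j) (m j) (a j) (b j)) ∧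
        (Pairwise fun j j' : Fin k => Disjoint
          (childRange g (s j) (m j) (a j) (b j))
          (childRange g (s j') (m j') (a j') (b j'))) ∧
        (∀ j j' : Fin k, ¬(a j = 0 ∨ b j = g) → ¬(a j' = 0 ∨ b j' = g) → j = j') :=
  stmt_3_general g β hβ
end
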